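/- For d = 1 and d = 2, the function x ↦ [I₀(x/d)]^d e^{−x} is NOT integrable on the interval (0, ∞); that is, the integral ∫₀^∞ [I₀(x/d)]^d e^{−x} dx diverges. -/

import Mathlib

/-!
With `b k = x ^ (2k) / (2k)!`, the `k`-th term of `I₀(x)` is `C(2k, k) 4⁻ᵏ b k ≥ b k / (2√k)`.
Bounding `1/√k` below by its tangent line at `k = x` gives
`4x√x I₀(x) ≥ ∑ (3x - k) b k = 3x cosh x - (x/2) sinh x ≥ x eˣ`, so `I₀(x) ≥ eˣ / (4√x)` for
`x ≥ 1`. Hence `I₀(x) e⁻ˣ ≥ 1/(4x)` and `I₀(x/2)² e⁻ˣ ≥ 1/(8x)`, and `1/x` is not integrable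
at infinity.
-/

open MeasureTheory

/-- The modified Bessel function of the first kind of order zero,
`I₀(x) = ∑_{k ≥ 0} (x/2)^{2k} / (k!)²`. -/
noncomputable def besselI0 (x : ℝ) : ℝ :=
  ∑' k : ℕ, (x / 2) ^ (2 * k) / ((k.factorial : ℝ)) ^ 2

open Real Set Filter Nat

theorem Nat.sixteen_pow_le_four_mul_mul_centralBinom_sq {n : ℕ} (hn : 0 < n) :
    16 ^ n ≤ 4 * n * centralBinom n ^ 2 := by
  induction n, hn using Nat.le_induction with
  | base => decide
  | succ n hn ih =>
    have hrec := succ_mul_centralBinom_succ n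
    have hpos : 0 < (n + 1) ^ 2 := by positivity
    refine le_of_mul_le_mul_right ?_ hpos
    calc 16 ^ (n + 1) * (n + 1) ^ 2 ≤ 16 * (4 * n * centralBinom n ^ 2) * (n + 1) ^ 2 := by
          rw [pow_succ, mul_comm (16 ^ n)]; gcongr
      _ ≤ 4 * (n + 1) * (2 * (2 * n + 1) * centralBinom n) ^ 2 := by
          nlinarith [Nat.zero_le (centralBinom n ^ 2 * (n + 1))]
      _ = 4 * (n + 1) * centralBinom (n + 1) ^ 2 * (n + 1) ^ 2 := by
          rw [← hrec]; ring

theorem Nat.four_pow_le_two_mul_sqrt_mul_centralBinom {n : ℕ} (hn : 0 < n) :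
    (4 : ℝ) ^ n ≤ 2 * √n * centralBinom n := by
  refine (pow_le_pow_iff_left₀ (by positivity) (by positivity) two_ne_zero).1 ?_
  calc ((4 : ℝ) ^ n) ^ 2 = 16 ^ n := by rw [← pow_mul, mul_comm, pow_mul]; norm_num
    _ ≤ 4 * n * centralBinom n ^ 2 := by
        exact_mod_cast sixteen_pow_le_four_mul_mul_centralBinom_sq hn
    _ = (2 * √n * centralBinom n) ^ 2 := by rw [mul_pow, mul_pow, sq_sqrt n.cast_nonneg]; ring

theorem div_two_pow_div_factorial_sq_eq (x : ℝ) (k : ℕ) :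
    (x / 2) ^ (2 * k) / (k ! : ℝ) ^ 2 = centralBinom k / 4 ^ k * (x ^ (2 * k) / (2 * k)!) := by
  have hfact : (centralBinom k * k ! ^ 2 : ℝ) = (2 * k)! := by
    rw [centralBinom_eq_two_mul_choose, two_mul, sq, ← mul_assoc]
    exact_mod_cast add_choose_mul_factorial_mul_factorial k k
  have hC : (centralBinom k : ℝ) ≠ 0 := by exact_mod_cast (centralBinom_pos k).ne'
  rw [← hfact, div_pow, pow_mul, pow_mul]
  field_simp
  norm_num

theorem hasSum_besselI0 (x : ℝ) :
    HasSum (fun k : ℕ => (x / 2) ^ (2 * k) / (k ! : ℝ) ^ 2) (besselI0 x) := by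
  refine Summable.hasSum (Summable.of_nonneg_of_le (fun k => by rw [pow_mul]; positivity)
    (fun k => ?_) (hasSum_cosh x).summable)
  have hb : 0 ≤ x ^ (2 * k) / (2 * k)! := by rw [pow_mul]; positivity
  have hc : (centralBinom k : ℝ) / 4 ^ k ≤ 1 :=
    div_le_one_of_le₀ (by exact_mod_cast centralBinom_le_four_pow k) (by positivity)
  rw [div_two_pow_div_factorial_sq_eq]
  exact mul_le_of_le_one_left hb hc

theorem besselI0_nonneg (x : ℝ) : 0 ≤ besselI0 x :=
  tsum_nonneg fun k => by rw [pow_mul]; positivity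

theorem hasSum_mul_pow_two_mul_div_factorial (x : ℝ) :
    HasSum (fun k : ℕ => k * (x ^ (2 * k) / (2 * k)!)) (x / 2 * sinh x) := by
  have hshift : (fun k : ℕ => ((k : ℝ) + 1) * (x ^ (2 * (k + 1)) / (2 * (k + 1))!)) =
      fun k => x / 2 * (x ^ (2 * k + 1) / (2 * k + 1)!) := by
    funext k
    rw [show 2 * (k + 1) = 2 * k + 1 + 1 by ring, factorial_succ, pow_succ]
    push_cast
    field_simp
    ring
  refine (hasSum_nat_add_iff' 1).1 ?_
  simpa [hshift] using (hasSum_sinh x).mul_left (x / 2)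

theorem sub_mul_pow_div_factorial_le {x : ℝ} (hx : 0 ≤ x) {k : ℕ} (hk : 0 < k) :
    (3 * x - k) * (x ^ (2 * k) / (2 * k)!) ≤
      4 * x * √x * ((x / 2) ^ (2 * k) / (k ! : ℝ) ^ 2) := by
  set b := x ^ (2 * k) / ((2 * k)! : ℝ)
  have hb : 0 ≤ b := by simp only [b, pow_mul]; positivity
  have hk' : 0 < √(k : ℝ) := sqrt_pos.2 (by exact_mod_cast hk)
  -- the tangent line of `t ↦ 1 / √t` at `t = x`
  have htangent : (3 * x - k) * √k ≤ 2 * x * √x := by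
    have := sq_sqrt hx
    have := sq_sqrt (k.cast_nonneg : (0 : ℝ) ≤ k)
    nlinarith [mul_nonneg (sq_nonneg (√x - √k)) (by positivity : 0 ≤ 2 * √x + √k)]
  have hbinom : 1 ≤ 2 * √k * (centralBinom k / 4 ^ k) := by
    rw [← mul_div_assoc, one_le_div (by positivity)]
    exact four_pow_le_two_mul_sqrt_mul_centralBinom hk
  rw [div_two_pow_div_factorial_sq_eq]
  refine le_of_mul_le_mul_right ?_ hk'
  calc (3 * x - k) * b * √k = (3 * x - k) * √k * b := by ring
    _ ≤ 2 * x * √x * b * 1 := by rw [mul_one]; gcongr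
    _ ≤ 2 * x * √x * b * (2 * √k * (centralBinom k / 4 ^ k)) := by gcongr
    _ = 4 * x * √x * (centralBinom k / 4 ^ k * b) * √k := by ring

theorem exp_le_four_mul_sqrt_mul_besselI0 {x : ℝ} (hx : 1 ≤ x) :
    exp x ≤ 4 * √x * besselI0 x := by
  have hx0 : 0 < x := by linarith
  have hsqrt : 1 ≤ √x := one_le_sqrt.2 hx
  have hsum : 3 * x * cosh x - x / 2 * sinh x ≤ 4 * x * √x * besselI0 x := by
    refine hasSum_le (fun k => ?_) (((hasSum_cosh x).mul_left (3 * x)).sub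
      (hasSum_mul_pow_two_mul_div_factorial x)) ((hasSum_besselI0 x).mul_left _)
    rcases Nat.eq_zero_or_pos k with rfl | hk
    · have : 3 * x ≤ 4 * x * √x := by nlinarith
      simpa using this
    · rw [← sub_mul]
      exact sub_mul_pow_div_factorial_le hx0.le hk
  have hcosh : exp x ≤ 2 * cosh x := by
    rw [cosh_eq]; linarith [exp_pos (-x)]
  have hsinh : x * sinh x ≤ x * cosh x := by gcongr; exact (sinh_lt_cosh x).le
  have : x * exp x ≤ x * (4 * √x * besselI0 x) := by
    nlinarith [mul_le_mul_of_nonneg_left hcosh hx0.le, mul_pos hx0 (cosh_pos x)]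
  exact le_of_mul_le_mul_left this hx0

theorem not_integrableOn_Ioi_of_eventually_inv_le {f : ℝ → ℝ} {c : ℝ} (hc : 0 < c)
    (hf : ∀ᶠ x in atTop, (c * x)⁻¹ ≤ f x) (a : ℝ) : ¬ IntegrableOn f (Ioi a) := by
  obtain ⟨N, hN⟩ := eventually_atTop.1 hf
  set b := max (max a N) 0
  have hsub : Ioi b ⊆ Ioi a := Ioi_subset_Ioi ((le_max_left _ _).trans (le_max_left _ _))
  intro h
  refine not_integrableOn_Ioi_inv (a := b) (((h.mono_set hsub).const_mul c).mono'
    measurable_inv.aestronglyMeasurable ?_)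
  filter_upwards [ae_restrict_mem measurableSet_Ioi] with x hx
  have hx0 : 0 < x := (le_max_right _ _).trans_lt hx
  have hxN : N ≤ x := ((le_max_right _ _).trans (le_max_left _ _)).trans hx.le
  calc ‖x⁻¹‖ = c * (c * x)⁻¹ := by
        rw [norm_of_nonneg (inv_nonneg.2 hx0.le)]; field_simp
    _ ≤ c * f x := by gcongr; exact hN x hxN

theorem inv_le_besselI0_mul_exp_neg {x : ℝ} (hx : 1 ≤ x) :
    (4 * x)⁻¹ ≤ besselI0 x * exp (-x) := by
  have hsqrt : √x ≤ x := sqrt_le_self_iff.2 (Or.inr hx)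
  rw [inv_le_iff_one_le_mul₀' (by positivity)]
  calc 1 = exp x * exp (-x) := by rw [← exp_add, add_neg_cancel, exp_zero]
    _ ≤ 4 * √x * besselI0 x * exp (-x) := by gcongr; exact exp_le_four_mul_sqrt_mul_besselI0 hx
    _ ≤ 4 * x * (besselI0 x * exp (-x)) := by
        rw [mul_assoc]; gcongr; exact mul_nonneg (besselI0_nonneg x) (exp_pos _).le

theorem inv_le_besselI0_half_sq_mul_exp_neg {x : ℝ} (hx : 2 ≤ x) :
    (8 * x)⁻¹ ≤ besselI0 (x / 2) ^ 2 * exp (-x) := by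
  rw [inv_le_iff_one_le_mul₀' (by positivity)]
  calc 1 = exp (x / 2) ^ 2 * exp (-x) := by
        rw [sq, ← exp_add, ← exp_add]; ring_nf; exact exp_zero.symm
    _ ≤ (4 * √(x / 2) * besselI0 (x / 2)) ^ 2 * exp (-x) := by
        gcongr; exact exp_le_four_mul_sqrt_mul_besselI0 (by linarith)
    _ = 8 * x * (besselI0 (x / 2) ^ 2 * exp (-x)) := by
        rw [mul_pow, mul_pow, sq_sqrt (by linarith)]; ring

/-- For `d = 1` and `d = 2`, the function `x ↦ [I₀(x/d)]^d e^{-x}` is not integrable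
on `(0, ∞)`. -/
theorem not_integrableOn_besselI0_pow_mul_exp :
    ¬ IntegrableOn (fun x : ℝ => (besselI0 (x / 1)) ^ 1 * Real.exp (-x)) (Set.Ioi 0) ∧
    ¬ IntegrableOn (fun x : ℝ => (besselI0 (x / 2)) ^ 2 * Real.exp (-x)) (Set.Ioi 0) := by
  constructor
  · refine not_integrableOn_Ioi_of_eventually_inv_le four_pos ?_ 0
    filter_upwards [eventually_ge_atTop 1] with x hx
    simpa using inv_le_besselI0_mul_exp_neg hx
  · refine not_integrableOn_Ioi_of_eventually_inv_le (by norm_num : (0 : ℝ) < 8) ?_ 0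
    filter_upwards [eventually_ge_atTop 2] with x hx
    exact inv_le_besselI0_half_sq_mul_exp_neg hx
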